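/- arXiv:1805.02640 — 2 statements merged into one kernel-verified Lean document; each statement's English description precedes it below -/
import Mathlib

section
/- Let Φ ∈ ℝ^{np×n} be (n-stacked) q-error detectable, let x ∈ ℝⁿ, e ∈ Σ_qⁿ, and v ∈ ℝ^{np} with ‖v_i‖₂ ≤ v_max for every block i ∈ {1,…,p}, and let ẑ = Φx + v + e. Define x̂ = Φ†ẑ and r = ẑ − Φx̂. If ‖r_i‖₂ > √p · v_max for some i ∈ {1,…,p}, then e ≠ 0. -/
open scoped Classical
open Finset Matrix

noncomputable section

namespace SecureEst

variable {n p : ℕ}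

/-- The `i`-th `n`-block of an `n`-stacked vector. -/
def blk (z : Fin p × Fin n → ℝ) (i : Fin p) : Fin n → ℝ := fun j => z (i, j)

/-- The `n`-stacked support of a stacked vector. -/
def blockSupp (z : Fin p × Fin n → ℝ) : Finset (Fin p) :=
  Finset.univ.filter fun i => blk z i ≠ 0

/-- The `n`-stacked ℓ⁰ "norm": number of nonzero blocks. -/
def l0n (z : Fin p × Fin n → ℝ) : ℕ := (blockSupp z).card

/-- `n`-stacked `q`-sparsity: membership in `Σ_qⁿ`. -/
def Sparse (q : ℕ) (z : Fin p × Fin n → ℝ) : Prop := l0n z ≤ q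

/-- Euclidean (ℓ²) norm of a real vector. -/
def enorm {m : Type*} [Fintype m] (x : m → ℝ) : ℝ := Real.sqrt (∑ i, x i ^ 2)

/-- `Φ_{Λⁿ}`: zero out the row-blocks of `Φ` outside `Λ`. -/
def zeroB (Λ : Finset (Fin p)) (Φ : Matrix (Fin p × Fin n) (Fin n) ℝ) :
    Matrix (Fin p × Fin n) (Fin n) ℝ :=
  fun ij k => if ij.1 ∈ Λ then Φ ij k else 0

/-- `z_{Λⁿ}`: zero out the blocks of a stacked vector outside `Λ`. -/
def zeroV (Λ : Finset (Fin p)) (z : Fin p × Fin n → ℝ) : Fin p × Fin n → ℝ :=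
  fun ij => if ij.1 ∈ Λ then z ij else 0

/-- `Φ_{Γᵢⁿ}`: the `i`-th row-block of `Φ`. -/
def rowBlk (Φ : Matrix (Fin p × Fin n) (Fin n) ℝ) (i : Fin p) :
    Matrix (Fin n) (Fin n) ℝ := fun j k => Φ (i, j) k

/-- Moore–Penrose pseudoinverse (full-column-rank formula `(MᵀM)⁻¹Mᵀ`). -/
def pinv {m k : Type*} [Fintype m] [Fintype k] [DecidableEq k]
    (M : Matrix m k ℝ) : Matrix k m ℝ := (Mᵀ * M)⁻¹ * Mᵀ

/-- Spectral norm (largest singular value) of a real matrix. -/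
def specNorm {m k : Type*} [Fintype m] [Fintype k] (M : Matrix m k ℝ) : ℝ :=
  sSup {r | ∃ x : k → ℝ, enorm x = 1 ∧ r = enorm (M.mulVec x)}

/-- Minimum singular value of a (tall) real matrix. -/
def sigmaMin {m k : Type*} [Fintype m] [Fintype k] (M : Matrix m k ℝ) : ℝ :=
  sInf {r | ∃ x : k → ℝ, enorm x = 1 ∧ r = enorm (M.mulVec x)}

/-- `(n-stacked) q`-error detectability. -/
def ErrDetectable (Φ : Matrix (Fin p × Fin n) (Fin n) ℝ) (q : ℕ) : Prop :=
  ∀ x x' : Fin n → ℝ, ∀ e : Fin p × Fin n → ℝ,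
    Sparse q e → Φ.mulVec x + e = Φ.mulVec x' → x = x'

/-- `(n-stacked) q`-error correctability. -/
def ErrCorrectable (Φ : Matrix (Fin p × Fin n) (Fin n) ℝ) (q : ℕ) : Prop :=
  ∀ x₁ x₂ : Fin n → ℝ, ∀ e₁ e₂ : Fin p × Fin n → ℝ,
    Sparse q e₁ → Sparse q e₂ →
      Φ.mulVec x₁ + e₁ = Φ.mulVec x₂ + e₂ → x₁ = x₂

/-- `(n-stacked)` cospark. -/
def cosparkN (Φ : Matrix (Fin p × Fin n) (Fin n) ℝ) : ℕ :=
  sInf {m : ℕ | ∃ x : Fin n → ℝ, x ≠ 0 ∧ m = l0n (Φ.mulVec x)}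

/-- `ρ_{p,q}(Φ)`. -/
def rho (Φ : Matrix (Fin p × Fin n) (Fin n) ℝ) (q : ℕ) : ℝ :=
  sInf {r | ∃ Λ : Finset (Fin p), Λ.card = p - q ∧ r = sigmaMin (zeroB Λ Φ)}

/-- `η_{p,q}(Φ)`. -/
def eta (Φ : Matrix (Fin p × Fin n) (Fin n) ℝ) (q : ℕ) : ℝ :=
  sSup {r | ∃ Λ : Finset (Fin p), Λ.card = p - q ∧
    ∃ i : Fin p, i ∉ Λ ∧ r = specNorm (rowBlk Φ i * pinv (zeroB Λ Φ))}

/-- `κ^d_{p,q}(Φ)`. -/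
def kappaD (Φ : Matrix (Fin p × Fin n) (Fin n) ℝ) (q : ℕ) : ℝ :=
  (Real.sqrt (p : ℝ) + 1) * Real.sqrt ((p - q : ℕ) : ℝ) / rho Φ q

/-- `κ^e_{p,q}(Φ)`. -/
def kappaE (Φ : Matrix (Fin p × Fin n) (Fin n) ℝ) (q : ℕ) : ℝ :=
  (eta Φ q * Real.sqrt ((p - q : ℕ) : ℝ) + 1) * (Real.sqrt (p : ℝ) + 1)

/-- The finite candidate set `F_{p,r}(ẑ)`. -/
def Fset (Φ : Matrix (Fin p × Fin n) (Fin n) ℝ) (r : ℕ) (z : Fin p × Fin n → ℝ) :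
    Set (Fin n → ℝ) :=
  {χ | ∃ Λ : Finset (Fin p), Λ.card = p - r ∧
    χ = (pinv (zeroB Λ Φ)).mulVec (zeroV Λ z)}

/-- `η'_{p,q,r}(Φ)`. -/
def eta' (Φ : Matrix (Fin p × Fin n) (Fin n) ℝ) (q r : ℕ) : ℝ :=
  sSup {a | ∃ Λ : Finset (Fin p), Λ.card = p - q ∧
    a = sInf {b | ∃ Λ' : Finset (Fin p), Λ' ⊆ Λ ∧ Λ'.card = p - r ∧
      b = sSup {c | ∃ i ∈ Λ \ Λ',
        c = specNorm (rowBlk Φ i * pinv (zeroB Λ' Φ))}}}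

/-- `ϑ_{p,q,r}(Φ)`. -/
def theta (Φ : Matrix (Fin p × Fin n) (Fin n) ℝ) (q r : ℕ) : ℝ :=
  max (eta' Φ q r * Real.sqrt ((p - r : ℕ) : ℝ) + 1) (Real.sqrt ((p - r : ℕ) : ℝ))

/-- `κ^c_{p,q,r}(Φ)`. -/
def kappaC (Φ : Matrix (Fin p × Fin n) (Fin n) ℝ) (q r : ℕ) : ℝ :=
  (theta Φ q r + 1) * Real.sqrt ((p - 2 * q : ℕ) : ℝ) / rho Φ (2 * q)

/-- `κ^{c'}_{p,q,r}(Φ)`. -/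
def kappaC' (Φ : Matrix (Fin p × Fin n) (Fin n) ℝ) (q r : ℕ) : ℝ :=
  (theta Φ q r - 1) / sSup {c | ∃ i : Fin p, c = specNorm (rowBlk Φ i)}

/-- Stacked observability matrix `G` with row-blocks `Gᵢ = [cᵢᵀ (cᵢA)ᵀ ⋯ (cᵢAⁿ⁻¹)ᵀ]ᵀ`. -/
def obsG (A : Matrix (Fin n) (Fin n) ℝ) (C : Matrix (Fin p) (Fin n) ℝ) :
    Matrix (Fin p × Fin n) (Fin n) ℝ :=
  fun ij k => (C * A ^ (ij.2 : ℕ)) ij.1 k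

/-- `C_Λ`: zero out the rows of `C` outside `Λ`. -/
def zeroRows (Λ : Finset (Fin p)) (C : Matrix (Fin p) (Fin n) ℝ) :
    Matrix (Fin p) (Fin n) ℝ :=
  fun i k => if i ∈ Λ then C i k else 0

/-- Observability of the pair `(A, C)`: the observability matrix has full column rank. -/
def Observable (A : Matrix (Fin n) (Fin n) ℝ) (C : Matrix (Fin p) (Fin n) ℝ) : Prop :=
  (obsG A C).rank = n

/-- `q`-redundant observability. -/
def RedObservable (A : Matrix (Fin n) (Fin n) ℝ) (C : Matrix (Fin p) (Fin n) ℝ)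
    (q : ℕ) : Prop :=
  ∀ Λ : Finset (Fin p), p - q ≤ Λ.card → Observable A (zeroRows Λ C)

/-- Euclidean norm of a complex vector. -/
def enormC {m : Type*} [Fintype m] (v : m → ℂ) : ℝ :=
  Real.sqrt (∑ i, ‖v i‖ ^ 2)

/-- The set `V(A)` of normalized complex eigenvectors of a real matrix `A`. -/
def eigSet (A : Matrix (Fin n) (Fin n) ℝ) : Set (Fin n → ℂ) :=
  {v | (∃ μ : ℂ, (A.map Complex.ofReal).mulVec v = μ • v) ∧ enormC v = 1}

/-- ℓ⁰ norm of a complex vector. -/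
def l0C (y : Fin p → ℂ) : ℕ := (Finset.univ.filter fun i => y i ≠ 0).card

/-- `n`-stacked ℓ⁰ norm of a complex stacked vector. -/
def l0nC (z : Fin p × Fin n → ℂ) : ℕ :=
  (Finset.univ.filter fun i => (fun j => z (i, j)) ≠ (0 : Fin n → ℂ)).card

/-- The dynamic security index `α_d(A, C)`. -/
def alphaD (A : Matrix (Fin n) (Fin n) ℝ) (C : Matrix (Fin p) (Fin n) ℝ) : ℕ :=
  sInf {m : ℕ | ∃ v ∈ eigSet A, m = l0C ((C.map Complex.ofReal).mulVec v)}

end SecureEst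

/-! With `e = 0`, detectability makes `Φ` injective, so `Φ†Φ = 1` and the residual is
`(I - ΦΦ†) v`, where `ΦΦ†` is an orthogonal projection (symmetric and idempotent).
Hence `‖rᵢ‖₂ ≤ ‖r‖₂ ≤ ‖v‖₂ ≤ √p · v_max`. -/

namespace SecureEst

section Euclidean

variable {m : Type*} [Fintype m]

lemma enorm_eq_sqrt_dotProduct (x : m → ℝ) : enorm x = √(x ⬝ᵥ x) := by
  simp only [enorm, dotProduct, sq]

lemma enorm_le_enorm_of_dotProduct_le {x y : m → ℝ} (h : x ⬝ᵥ x ≤ y ⬝ᵥ y) :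
    enorm x ≤ enorm y := by
  simpa only [enorm_eq_sqrt_dotProduct] using Real.sqrt_le_sqrt h

lemma dotProduct_sub_mulVec_self_le {P : Matrix m m ℝ} (hsymm : Pᵀ = P) (hidem : P * P = P)
    (v : m → ℝ) : (v - P *ᵥ v) ⬝ᵥ (v - P *ᵥ v) ≤ v ⬝ᵥ v := by
  have hPv : (P *ᵥ v) ⬝ᵥ (P *ᵥ v) = v ⬝ᵥ (P *ᵥ v) := by
    rw [dotProduct_mulVec, vecMul_mulVec, ← mulVec_transpose, hsymm, hidem, dotProduct_comm,
      hsymm]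
  have hexpand : (v - P *ᵥ v) ⬝ᵥ (v - P *ᵥ v)
      = v ⬝ᵥ v - (P *ᵥ v) ⬝ᵥ (P *ᵥ v) := by
    simp only [sub_dotProduct, dotProduct_sub, dotProduct_comm (P *ᵥ v) v, hPv]
    ring
  rw [hexpand]
  exact sub_le_self _ (dotProduct_self_star_nonneg _)

end Euclidean

section Blocks

variable {n p : ℕ}

lemma enorm_sq_eq_sum_enorm_blk_sq (z : Fin p × Fin n → ℝ) :
    enorm z ^ 2 = ∑ i, enorm (blk z i) ^ 2 := by
  simp only [enorm, blk, Real.sq_sqrt (Finset.sum_nonneg fun _ _ => sq_nonneg _)]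
  exact Fintype.sum_prod_type _

lemma enorm_blk_le (z : Fin p × Fin n → ℝ) (i : Fin p) : enorm (blk z i) ≤ enorm z := by
  refine le_of_sq_le_sq ?_ (Real.sqrt_nonneg _)
  rw [enorm_sq_eq_sum_enorm_blk_sq]
  exact Finset.single_le_sum (fun j _ => sq_nonneg (enorm (blk z j))) (Finset.mem_univ i)

lemma enorm_le_sqrt_mul_of_enorm_blk_le {z : Fin p × Fin n → ℝ} {c : ℝ}
    (hc : 0 ≤ c) (h : ∀ i, enorm (blk z i) ≤ c) : enorm z ≤ √p * c := by
  refine le_of_sq_le_sq ?_ (mul_nonneg (Real.sqrt_nonneg _) hc)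
  rw [enorm_sq_eq_sum_enorm_blk_sq, mul_pow, Real.sq_sqrt (Nat.cast_nonneg p)]
  calc ∑ i, enorm (blk z i) ^ 2 ≤ ∑ _i : Fin p, c ^ 2 :=
        Finset.sum_le_sum fun i _ => pow_le_pow_left₀ (Real.sqrt_nonneg _) (h i) 2
    _ = p * c ^ 2 := by simp

lemma sparse_zero (q : ℕ) : Sparse q (0 : Fin p × Fin n → ℝ) := by
  have hblk : ∀ i, blk (0 : Fin p × Fin n → ℝ) i = 0 := fun _ => rfl
  simp [Sparse, l0n, blockSupp, hblk]

lemma ErrDetectable.injective_mulVec {Φ : Matrix (Fin p × Fin n) (Fin n) ℝ} {q : ℕ}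
    (h : ErrDetectable Φ q) : Function.Injective Φ.mulVec :=
  fun x x' hxx' => h x x' 0 (sparse_zero q) (by rw [add_zero, hxx'])

end Blocks

section Pinv

variable {m k : Type*} [Fintype m] [Fintype k] [DecidableEq k] {M : Matrix m k ℝ}

lemma pinv_mul_self (hM : Function.Injective M.mulVec) : pinv M * M = 1 := by
  have hG : Function.Injective (Mᵀ * M).mulVec := by
    rw [← coe_mulVecLin, ← LinearMap.ker_eq_bot, ker_mulVecLin_transpose_mul_self,
      LinearMap.ker_eq_bot, coe_mulVecLin]
    exact hM
  rw [pinv, Matrix.mul_assoc, nonsing_inv_mul]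
  exact (isUnit_iff_isUnit_det _).mp (mulVec_injective_iff_isUnit.mp hG)

lemma transpose_mul_pinv : (M * pinv M)ᵀ = M * pinv M := by
  rw [pinv, transpose_mul, transpose_mul, transpose_nonsing_inv, transpose_mul,
    transpose_transpose, Matrix.mul_assoc]

lemma mul_pinv_mul_mul_pinv (hM : Function.Injective M.mulVec) :
    M * pinv M * (M * pinv M) = M * pinv M := by
  rw [Matrix.mul_assoc, ← Matrix.mul_assoc (pinv M), pinv_mul_self hM, Matrix.one_mul]

def pinvResidual (M : Matrix m k ℝ) (z : m → ℝ) : m → ℝ := z - M *ᵥ (pinv M *ᵥ z)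

lemma pinvResidual_mulVec_add (hM : Function.Injective M.mulVec) (x : k → ℝ) (v : m → ℝ) :
    pinvResidual M (M *ᵥ x + v) = v - (M * pinv M) *ᵥ v := by
  rw [pinvResidual, mulVec_mulVec, mulVec_add, mulVec_mulVec, Matrix.mul_assoc,
    pinv_mul_self hM, Matrix.mul_one]
  abel

lemma enorm_pinvResidual_mulVec_add_le (hM : Function.Injective M.mulVec) (x : k → ℝ)
    (v : m → ℝ) : enorm (pinvResidual M (M *ᵥ x + v)) ≤ enorm v := by
  rw [pinvResidual_mulVec_add hM]
  exact enorm_le_enorm_of_dotProduct_le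
    (dotProduct_sub_mulVec_self_le transpose_mul_pinv (mul_pinv_mul_mul_pinv hM) v)

end Pinv

end SecureEst

open SecureEst in
theorem residual_detection_noisy_attack_general {n p : ℕ}
    (Φ : Matrix (Fin p × Fin n) (Fin n) ℝ) (q : ℕ)
    (hdet : ErrDetectable Φ q)
    (x : Fin n → ℝ) (e v : Fin p × Fin n → ℝ) (vmax : ℝ)
    (hv : ∀ i : Fin p, SecureEst.enorm (blk v i) ≤ vmax)
    (zhat : Fin p × Fin n → ℝ) (xhat : Fin n → ℝ) (r : Fin p × Fin n → ℝ)
    (hz : zhat = Φ.mulVec x + v + e)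
    (hxhat : xhat = (pinv Φ).mulVec zhat)
    (hr : r = zhat - Φ.mulVec xhat)
    (hres : ∃ i : Fin p, Real.sqrt (p : ℝ) * vmax < SecureEst.enorm (blk r i)) :
    e ≠ 0 := by
  rintro rfl
  obtain ⟨i, hi⟩ := hres
  have hr' : r = pinvResidual Φ (Φ *ᵥ x + v) := by
    rw [hr, hxhat, hz, add_zero, pinvResidual]
  have hvmax : 0 ≤ vmax := (Real.sqrt_nonneg _).trans (hv i)
  have hri : SecureEst.enorm (blk r i) ≤ √p * vmax :=
    calc SecureEst.enorm (blk r i) ≤ SecureEst.enorm r := enorm_blk_le r i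
      _ ≤ SecureEst.enorm v := hr' ▸ enorm_pinvResidual_mulVec_add_le hdet.injective_mulVec x v
      _ ≤ √p * vmax := enorm_le_sqrt_mul_of_enorm_blk_le hvmax hv
  exact hi.not_ge hri

open SecureEst in
/-- Theorem 1.(i): with `zhat = Φx + v + e`, `xhat = Φ†zhat`, `r = zhat − Φxhat`,
if some residual block satisfies `‖rᵢ‖₂ > √p · v_max`, then `e ≠ 0`. -/
theorem residual_detection_noisy_attack {n p : ℕ}
    (Φ : Matrix (Fin p × Fin n) (Fin n) ℝ) (q : ℕ)
    (hdet : ErrDetectable Φ q)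
    (x : Fin n → ℝ) (e v : Fin p × Fin n → ℝ) (vmax : ℝ)
    (he : Sparse q e) (hv : ∀ i : Fin p, SecureEst.enorm (blk v i) ≤ vmax)
    (zhat : Fin p × Fin n → ℝ) (xhat : Fin n → ℝ) (r : Fin p × Fin n → ℝ)
    (hz : zhat = Φ.mulVec x + v + e)
    (hxhat : xhat = (pinv Φ).mulVec zhat)
    (hr : r = zhat - Φ.mulVec xhat)
    (hres : ∃ i : Fin p, Real.sqrt (p : ℝ) * vmax < SecureEst.enorm (blk r i)) :
    e ≠ 0 :=
  residual_detection_noisy_attack_general Φ q hdet x e v vmax hv zhat xhat r hz hxhat hr hres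
end
end

section
/- Let A ∈ ℝ^{n×n} and C ∈ ℝ^{p×n} with rows c₁,…,c_p, and let G ∈ ℝ^{np×n} be the stacked observability matrix whose i-th row-block is G_i = [c_iᵀ (c_iA)ᵀ ⋯ (c_iA^{n−1})ᵀ]ᵀ. Then the pair (A, C) is q-redundant observable if and only if G is (n-stacked) q-error detectable. -/
/-! Both sides say that no nonzero state `x` makes `G x` vanish on a set `Λ` of at least `p - q`
blocks. For observability this is because the observability matrix of `(A, C_Λ)` is `G` with the
blocks outside `Λ` zeroed; for error detectability because a sparse error `e` with
`G x + e = G x'` is `G (x' - x)`, whose zero blocks form the complement of its support. -/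

open scoped Classical
open Finset Matrix

noncomputable section

namespace SecureEst

variable {n p : ℕ}

theorem _root_.Matrix.rank_eq_card_iff_forall_mulVec_eq_zero {K m n : Type*} [Field K] [Fintype n]
    (M : Matrix m n K) : M.rank = Fintype.card n ↔ ∀ v, M *ᵥ v = 0 → v = 0 := by
  rw [← ker_mulVecLin_eq_bot_iff, LinearMap.ker_eq_bot, coe_mulVecLin, mulVec_injective_iff,
    linearIndependent_iff_card_eq_finrank_span, rank_eq_finrank_span_cols, Set.finrank, eq_comm]

theorem zeroV_eq_zero_iff_disjoint (Λ : Finset (Fin p)) (z : Fin p × Fin n → ℝ) :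
    zeroV Λ z = 0 ↔ Disjoint Λ (blockSupp z) := by
  simp only [funext_iff, Prod.forall, zeroV, Pi.zero_apply, ite_eq_right_iff,
    Finset.disjoint_left, blockSupp, blk, Finset.mem_filter, Finset.mem_univ, true_and, ne_eq,
    not_not]
  exact forall_congr' fun i => by tauto

theorem sparse_iff_exists_zeroV_eq_zero (q : ℕ) (z : Fin p × Fin n → ℝ) :
    Sparse q z ↔ ∃ Λ : Finset (Fin p), p - q ≤ Λ.card ∧ zeroV Λ z = 0 := by
  simp only [zeroV_eq_zero_iff_disjoint]
  constructor
  · intro hz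
    refine ⟨(blockSupp z)ᶜ, ?_, disjoint_compl_left⟩
    rw [card_compl, Fintype.card_fin]
    exact Nat.sub_le_sub_left hz p
  · rintro ⟨Λ, hcard, hdisj⟩
    have hsupp := card_le_card (subset_compl_iff_disjoint_right.mpr hdisj.symm)
    rw [card_compl, Fintype.card_fin] at hsupp
    exact hsupp.trans (by omega)

theorem errDetectable_iff_forall_sparse_mulVec (Φ : Matrix (Fin p × Fin n) (Fin n) ℝ) (q : ℕ) :
    ErrDetectable Φ q ↔ ∀ d, Sparse q (Φ *ᵥ d) → d = 0 := by
  constructor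
  · intro hΦ d hd
    exact (hΦ 0 d (Φ *ᵥ d) hd (by rw [mulVec_zero, zero_add])).symm
  · intro hΦ x x' e he heq
    have he' : e = Φ *ᵥ (x' - x) := by rw [mulVec_sub, ← heq, add_sub_cancel_left]
    exact (sub_eq_zero.mp (hΦ _ (he' ▸ he))).symm

theorem zeroB_mulVec (Λ : Finset (Fin p)) (Φ : Matrix (Fin p × Fin n) (Fin n) ℝ)
    (v : Fin n → ℝ) : zeroB Λ Φ *ᵥ v = zeroV Λ (Φ *ᵥ v) := by
  ext ij
  by_cases h : ij.1 ∈ Λ <;> simp [zeroB, zeroV, mulVec, dotProduct, h]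

theorem obsG_zeroRows (A : Matrix (Fin n) (Fin n) ℝ) (C : Matrix (Fin p) (Fin n) ℝ)
    (Λ : Finset (Fin p)) : obsG A (zeroRows Λ C) = zeroB Λ (obsG A C) := by
  ext ij k
  by_cases h : ij.1 ∈ Λ <;> simp [obsG, zeroB, zeroRows, mul_apply, h]

theorem observable_zeroRows_iff (A : Matrix (Fin n) (Fin n) ℝ) (C : Matrix (Fin p) (Fin n) ℝ)
    (Λ : Finset (Fin p)) :
    Observable A (zeroRows Λ C) ↔ ∀ v, zeroV Λ (obsG A C *ᵥ v) = 0 → v = 0 := by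
  simp only [Observable, obsG_zeroRows, ← zeroB_mulVec]
  simpa only [Fintype.card_fin] using rank_eq_card_iff_forall_mulVec_eq_zero (zeroB Λ (obsG A C))

end SecureEst

open SecureEst in
/-- Proposition 3: the pair `(A, C)` is `q`-redundant observable iff
the stacked observability matrix `G` is `(n-stacked) q`-error detectable. -/
theorem redObservable_iff_errDetectable {n p : ℕ}
    (A : Matrix (Fin n) (Fin n) ℝ) (C : Matrix (Fin p) (Fin n) ℝ) (q : ℕ) :
    RedObservable A C q ↔ ErrDetectable (obsG A C) q := by
  simp only [RedObservable, observable_zeroRows_iff, errDetectable_iff_forall_sparse_mulVec,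
    sparse_iff_exists_zeroV_eq_zero]
  exact ⟨fun h v ⟨Λ, hΛ, hv⟩ => h Λ hΛ v hv, fun h Λ hΛ v hv => h v ⟨Λ, hΛ, hv⟩⟩
end
end
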